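/- arXiv:2501.07573 — 2 statements merged into one kernel-verified Lean document; each statement's English description precedes it below -/
import Mathlib

section
/- For all integers k,n ≥ 1 and 0 ≤ h ≤ (k−1)(n−1), the generalized Narayana numbers satisfy the symmetry N(k,n,h) = N(k,n,(k−1)(n−1)−h); that is, the number of standard Young tableaux of rectangular shape (n^k) with h ascents equals the number of those with (k−1)(n−1)−h ascents. -/
open Finset

/-- The set of cells of the Young diagram with row lengths `lam`
(rows and columns are 0-indexed). -/
def ydCells (lam : List ℕ) : Finset (ℕ × ℕ) :=
  (Finset.range lam.length).biUnion
    (fun r => (Finset.range (lam.getD r 0)).image (fun c => (r, c)))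

/-- `lam` is a partition: a weakly decreasing list of positive integers. -/
def IsPartition (lam : List ℕ) : Prop :=
  lam.Pairwise (· ≥ ·) ∧ ∀ x ∈ lam, 0 < x

/-- A standard Young tableau of shape `lam`: a filling of the cells of `lam` with the
numbers `1, …, lam.sum`, each used exactly once, increasing along rows and columns. -/
structure SYT (lam : List ℕ) where
  entry : ℕ × ℕ → ℕ
  zero_outside : ∀ p, p ∉ ydCells lam → entry p = 0
  bijOn : Set.BijOn entry (ydCells lam : Set (ℕ × ℕ)) (Set.Icc 1 lam.sum)
  row_incr : ∀ r c : ℕ, (r, c + 1) ∈ ydCells lam → entry (r, c) < entry (r, c + 1)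
  col_incr : ∀ r c : ℕ, (r + 1, c) ∈ ydCells lam → entry (r, c) < entry (r + 1, c)

open Classical in
/-- The descent set of a standard Young tableau: those `1 ≤ i ≤ N-1` such that the row of
`i` is strictly above (smaller index than) the row of `i+1`. -/
noncomputable def desSet (lam : List ℕ) (T : SYT lam) : Finset ℕ :=
  (Finset.Icc 1 (lam.sum - 1)).filter (fun i =>
    ∃ p ∈ ydCells lam, ∃ q ∈ ydCells lam,
      T.entry p = i ∧ T.entry q = i + 1 ∧ p.1 < q.1)

open Classical in
/-- The ascent set of a standard Young tableau: those `1 ≤ i ≤ N-1` such that the row of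
`i` is strictly below (larger index than) the row of `i+1`. -/
noncomputable def ascSet (lam : List ℕ) (T : SYT lam) : Finset ℕ :=
  (Finset.Icc 1 (lam.sum - 1)).filter (fun i =>
    ∃ p ∈ ydCells lam, ∃ q ∈ ydCells lam,
      T.entry p = i ∧ T.entry q = i + 1 ∧ q.1 < p.1)

open Classical in
/-- The high descent set: descents `i` such that moreover `i+1` lies strictly to the left
of `i`. -/
noncomputable def hdesSet (lam : List ℕ) (T : SYT lam) : Finset ℕ :=
  (Finset.Icc 1 (lam.sum - 1)).filter (fun i =>
    ∃ p ∈ ydCells lam, ∃ q ∈ ydCells lam,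
      T.entry p = i ∧ T.entry q = i + 1 ∧ p.1 < q.1 ∧ q.2 < p.2)

/-- The number of descents. -/
noncomputable def desNum (lam : List ℕ) (T : SYT lam) : ℕ := (desSet lam T).card

/-- The number of ascents. -/
noncomputable def ascNum (lam : List ℕ) (T : SYT lam) : ℕ := (ascSet lam T).card

/-- The number of high descents. -/
noncomputable def hdesNum (lam : List ℕ) (T : SYT lam) : ℕ := (hdesSet lam T).card

open Classical in
/-- `bounce lam T r s` is the number of `1 ≤ i ≤ N-1` such that `i` lies in (0-indexed)
row `r` and `i+1` lies in (0-indexed) row `s` of `T`. -/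
noncomputable def bounce (lam : List ℕ) (T : SYT lam) (r s : ℕ) : ℕ :=
  ((Finset.Icc 1 (lam.sum - 1)).filter (fun i =>
    ∃ p ∈ ydCells lam, ∃ q ∈ ydCells lam,
      T.entry p = i ∧ T.entry q = i + 1 ∧ p.1 = r ∧ q.1 = s)).card

/-!
Stanley's theory of P-partitions. Sorting the cells of a filling `F` by the key (value, cell)
lexicographically gives a standard tableau `T` and the sequence `a` of values read along `T`;
this identifies the weakly increasing fillings with values in `[1, m]` with the pairs `(T, a)`
where `a` is weakly increasing and strictly increasing at the ascents of `T`. With the cells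
compared in reverse order instead, the strictly increasing fillings correspond to pairs where `a`
is strict at the non-ascents. Subtracting the number of earlier strict positions makes `a`
unconstrained, so both counts are sums `∑ T, w (m - s T)`, where `s T` is the number of strict
positions and `w M` counts the weakly increasing sequences in `[1, M]`. On the `k × n` rectangle
`F (r, c) ↦ F (r, c) - r - c` turns strict fillings with values up to `m + (k - 1) + (n - 1)` into
weak fillings with values up to `m`, so `asc` and `(k - 1) (n - 1) - asc` give the same sums for
every `m`; as `w 0 = 0` and `w 1 = 1`, the sums determine the distributions.
-/

namespace PPartition

section Rank

variable {α β : Type*} [LinearOrder β] (s : Finset α) (f : α → β)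

def rankBy (p : α) : ℕ := #{q ∈ s | f q ≤ f p}

variable {s f}

lemma rankBy_le_rankBy {p q : α} (h : f p ≤ f q) : rankBy s f p ≤ rankBy s f q :=
  card_le_card fun _ hr => by
    simp only [mem_filter] at hr ⊢
    exact ⟨hr.1, hr.2.trans h⟩

lemma rankBy_lt_rankBy_iff {p q : α} (hq : q ∈ s) :
    rankBy s f p < rankBy s f q ↔ f p < f q := by
  refine ⟨fun h => lt_of_not_ge fun h' => (rankBy_le_rankBy h').not_gt h, fun h => ?_⟩
  refine card_lt_card ⟨fun r hr => ?_, fun hsub => ?_⟩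
  · simp only [mem_filter] at hr ⊢
    exact ⟨hr.1, hr.2.trans h.le⟩
  · have := (mem_filter.mp (hsub (mem_filter.mpr ⟨hq, le_rfl⟩))).2
    exact this.not_gt h

lemma bijOn_rankBy (hf : Set.InjOn f s) : Set.BijOn (rankBy s f) s (Set.Icc 1 #s) := by
  have hmaps : Set.MapsTo (rankBy s f) s (Set.Icc 1 #s) := fun p hp =>
    ⟨card_pos.mpr ⟨p, mem_filter.mpr ⟨hp, le_rfl⟩⟩, card_le_card (filter_subset _ _)⟩
  have hinj : Set.InjOn (rankBy s f) s := fun p hp q hq h =>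
    hf hp hq <| le_antisymm (not_lt.mp fun h' => ((rankBy_lt_rankBy_iff hp).mpr h').ne' h)
      (not_lt.mp fun h' => ((rankBy_lt_rankBy_iff hq).mpr h').ne h)
  refine ⟨hmaps, hinj, ?_⟩
  rw [← coe_Icc]
  exact surjOn_of_injOn_of_card_le _ (by rwa [coe_Icc]) hinj (by simp)

lemma rankBy_eq_of_bijOn {e : α → ℕ} {N : ℕ} (he : Set.BijOn e s (Set.Icc 1 N)) {p : α}
    (hp : p ∈ s) : rankBy s e p = e p := by
  have hN := (he.mapsTo hp).2
  refine (card_bij (t := Icc 1 (e p)) (fun q _ => e q) (fun q hq => ?_)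
    (fun q hq q' hq' h => ?_) fun i hi => ?_).trans (by simp)
  · obtain ⟨hqs, hle⟩ := mem_filter.mp hq
    exact mem_Icc.mpr ⟨(he.mapsTo hqs).1, hle⟩
  · exact he.injOn (mem_filter.mp hq).1 (mem_filter.mp hq').1 h
  · obtain ⟨q, hq, rfl⟩ := he.surjOn ⟨(mem_Icc.mp hi).1, (mem_Icc.mp hi).2.trans hN⟩
    exact ⟨q, mem_filter.mpr ⟨hq, (mem_Icc.mp hi).2⟩, rfl⟩

lemma eqOn_of_bijOn_of_lt_iff {e e' : α → ℕ} {N : ℕ} (he : Set.BijOn e s (Set.Icc 1 N))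
    (he' : Set.BijOn e' s (Set.Icc 1 N)) (h : ∀ p ∈ s, ∀ q ∈ s, e p < e q ↔ e' p < e' q) :
    Set.EqOn e e' s := fun p hp => by
  rw [← rankBy_eq_of_bijOn he hp, ← rankBy_eq_of_bijOn he' hp, rankBy, rankBy]
  refine congrArg card (filter_congr fun q hq => ?_)
  simpa only [not_lt] using (h p hp q hq).not

end Rank

lemma finite_of_support_subset_of_le {α : Type*} (s : Finset α) (B : ℕ) {P : (α → ℕ) → Prop}
    (hP : ∀ f, P f → (∀ x ∉ s, f x = 0) ∧ ∀ x ∈ s, f x ≤ B) : Finite {f // P f} := by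
  refine Finite.of_injective (fun (f : {f // P f}) (x : s) =>
    (⟨f.1 x, Nat.lt_succ_of_le ((hP _ f.2).2 x x.2)⟩ : Fin (B + 1))) fun f g hfg => ?_
  ext x
  by_cases hx : x ∈ s
  · exact congrArg Fin.val (congrFun hfg ⟨x, hx⟩)
  · rw [(hP _ f.2).1 x hx, (hP _ g.2).1 x hx]

section Chain

structure IsChain (N m : ℕ) (S : Finset ℕ) (a : ℕ → ℕ) : Prop where
  eq_zero : ∀ i ∉ Set.Icc 1 N, a i = 0
  mapsTo : Set.MapsTo a (Set.Icc 1 N) (Set.Icc 1 m)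
  monotoneOn : MonotoneOn a (Set.Icc 1 N)
  lt_succ : ∀ i ∈ S, a i < a (i + 1)

def numBelow (S : Finset ℕ) (i : ℕ) : ℕ := #{j ∈ S | j < i}

lemma numBelow_succ (S : Finset ℕ) (i : ℕ) :
    numBelow S (i + 1) = numBelow S i + if i ∈ S then 1 else 0 := by
  have : {j ∈ S | j < i + 1} = {j ∈ S | j < i} ∪ {j ∈ S | j = i} := by
    ext j
    simp only [mem_union, mem_filter, Nat.lt_succ_iff_lt_or_eq, and_or_left]
  rw [numBelow, numBelow, this, card_union_of_disjoint (disjoint_filter.mpr fun _ _ => by omega),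
    filter_eq']
  split_ifs <;> simp

lemma numBelow_le_card (S : Finset ℕ) (i : ℕ) : numBelow S i ≤ #S :=
  card_le_card (filter_subset _ _)

variable {N m : ℕ} {S : Finset ℕ}

lemma numBelow_eq_card (hS : S ⊆ Icc 1 (N - 1)) : numBelow S N = #S := by
  rw [numBelow, filter_true_of_mem fun j hj => ?_]
  have := mem_Icc.mp (hS hj)
  omega

lemma numBelow_lt {a : ℕ → ℕ} (ha : IsChain N m S a) (hS : S ⊆ Icc 1 (N - 1)) :
    ∀ i ∈ Set.Icc 1 N, numBelow S i < a i := by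
  intro i ⟨hi1, hiN⟩
  induction i, hi1 using Nat.le_induction with
  | base =>
    have h0 : numBelow S 1 = 0 :=
      card_eq_zero.mpr (filter_eq_empty_iff.mpr fun j hj => by have := mem_Icc.mp (hS hj); omega)
    rw [h0]
    exact (ha.mapsTo ⟨le_rfl, hiN⟩).1
  | succ i hi ih =>
    have hstep := ha.monotoneOn ⟨hi, by omega⟩ ⟨by omega, hiN⟩ (Nat.le_succ i)
    rw [numBelow_succ]
    split_ifs with hmem
    · have := ha.lt_succ i hmem; have := ih (by omega); omega
    · have := ih (by omega); omega

lemma IsChain.sub_numBelow {a : ℕ → ℕ} (ha : IsChain N m S a) (hS : S ⊆ Icc 1 (N - 1)) :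
    IsChain N (m - #S) ∅ fun i => if i ∈ Set.Icc 1 N then a i - numBelow S i else 0 := by
  have hlt := numBelow_lt ha hS
  have hmono : MonotoneOn (fun i => if i ∈ Set.Icc 1 N then a i - numBelow S i else 0)
      (Set.Icc 1 N) := by
    refine monotoneOn_of_le_add_one Set.ordConnected_Icc fun i _ hi hi' => ?_
    simp only [if_pos hi, if_pos hi', numBelow_succ]
    have := ha.monotoneOn hi hi' (Nat.le_succ i)
    have := hlt i hi
    split_ifs with hmem
    · have := ha.lt_succ i hmem; omega
    · omega
  refine ⟨fun i hi => if_neg hi, fun i hi => ?_, hmono, by simp⟩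
  have hN : N ∈ Set.Icc 1 N := ⟨hi.1.trans hi.2, le_rfl⟩
  have htop := hmono hi hN hi.2
  simp only [if_pos hi, if_pos hN, numBelow_eq_card hS] at htop ⊢
  have := hlt i hi
  have := (ha.mapsTo hN).2
  exact ⟨by omega, by omega⟩

lemma IsChain.add_numBelow {b : ℕ → ℕ} (hb : IsChain N (m - #S) ∅ b) (hS : S ⊆ Icc 1 (N - 1)) :
    IsChain N m S fun i => if i ∈ Set.Icc 1 N then b i + numBelow S i else 0 := by
  refine ⟨fun i hi => if_neg hi, fun i hi => ?_, fun i hi j hj hij => ?_, fun i hiS => ?_⟩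
  · simp only [if_pos hi]
    obtain ⟨h1, h2⟩ := hb.mapsTo hi
    have := numBelow_le_card S i
    exact ⟨by omega, by omega⟩
  · simp only [if_pos hi, if_pos hj]
    exact add_le_add (hb.monotoneOn hi hj hij) (card_le_card fun x hx => by
      simp only [mem_filter] at hx ⊢; exact ⟨hx.1, hx.2.trans_le hij⟩)
  · have := mem_Icc.mp (hS hiS)
    have hi : i ∈ Set.Icc 1 N := ⟨by omega, by omega⟩
    have hi' : i + 1 ∈ Set.Icc 1 N := ⟨by omega, by omega⟩
    simp only [if_pos hi, if_pos hi', numBelow_succ, if_pos hiS]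
    have := hb.monotoneOn hi hi' (Nat.le_succ i)
    omega

def chainShiftEquiv (hS : S ⊆ Icc 1 (N - 1)) :
    {a // IsChain N m S a} ≃ {b // IsChain N (m - #S) ∅ b} where
  toFun a := ⟨_, a.2.sub_numBelow hS⟩
  invFun b := ⟨_, b.2.add_numBelow hS⟩
  left_inv a := Subtype.ext <| funext fun i => by
    by_cases hi : i ∈ Set.Icc 1 N
    · have := numBelow_lt a.2 hS i hi
      simp only [if_pos hi]
      omega
    · simp only [if_neg hi, a.2.eq_zero i hi]
  right_inv b := Subtype.ext <| funext fun i => by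
    by_cases hi : i ∈ Set.Icc 1 N
    · simp only [if_pos hi, Nat.add_sub_cancel]
    · simp only [if_neg hi, b.2.eq_zero i hi]

instance : Finite {a // IsChain N m S a} :=
  finite_of_support_subset_of_le (Icc 1 N) m fun a ha =>
    ⟨fun i hi => ha.eq_zero i (by simpa using hi), fun i hi => (ha.mapsTo (by simpa using hi)).2⟩

noncomputable def numChains (N M : ℕ) : ℕ := Nat.card {a // IsChain N M ∅ a}

lemma card_chains (hS : S ⊆ Icc 1 (N - 1)) :
    Nat.card {a // IsChain N m S a} = numChains N (m - #S) :=
  Nat.card_congr (chainShiftEquiv hS)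

lemma numChains_zero (hN : 1 ≤ N) : numChains N 0 = 0 :=
  Nat.card_eq_zero.mpr <| Or.inl ⟨fun a => by
    obtain ⟨h1, h2⟩ := a.2.mapsTo (⟨le_rfl, hN⟩ : 1 ∈ Set.Icc 1 N)
    omega⟩

lemma numChains_one : numChains N 1 = 1 := by
  refine Nat.card_eq_one_iff_exists.mpr ⟨⟨fun i => if i ∈ Set.Icc 1 N then 1 else 0,
    fun i hi => if_neg hi, fun i hi => by rw [if_pos hi]; simp,
    fun i hi j hj _ => by rw [if_pos hi, if_pos hj], by simp⟩, fun a => Subtype.ext ?_⟩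
  funext i
  by_cases hi : i ∈ Set.Icc 1 N
  · simp only [if_pos hi]
    exact le_antisymm (a.2.mapsTo hi).2 (a.2.mapsTo hi).1
  · simp only [if_neg hi, a.2.eq_zero i hi]

end Chain

section Fiber

variable {ι : Type*} [Fintype ι] {φ : ℕ → ℕ}

lemma sum_apply_sub_eq_sum_card_fiber (h0 : φ 0 = 0) (f : ι → ℕ) (m : ℕ) :
    ∑ x, φ (m - f x) = ∑ j ∈ range m, #{x | f x = j} * φ (m - j) := by
  classical
  rw [← sum_filter_of_ne (p := fun x => f x ∈ range m) fun x _ hx => ?_,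
    ← sum_fiberwise_eq_sum_filter' univ (range m) f fun j => φ (m - j)]
  · simp only [sum_const, smul_eq_mul]
  · refine mem_range.mpr (lt_of_not_ge fun hle => hx ?_)
    rw [Nat.sub_eq_zero_of_le hle, h0]

lemma card_fiber_eq_of_sum_apply_sub_eq (h0 : φ 0 = 0) (h1 : φ 1 ≠ 0) {f g : ι → ℕ}
    (H : ∀ m, ∑ x, φ (m - f x) = ∑ x, φ (m - g x)) (h : ℕ) :
    #{x | f x = h} = #{x | g x = h} := by
  induction h using Nat.strong_induction_on with
  | _ h ih =>
    have key := H (h + 1)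
    rw [sum_apply_sub_eq_sum_card_fiber h0, sum_apply_sub_eq_sum_card_fiber h0,
      sum_range_succ, sum_range_succ,
      sum_congr rfl fun j hj => by rw [ih j (mem_range.mp hj)], Nat.add_sub_cancel_left] at key
    exact Nat.eq_of_mul_eq_mul_right (Nat.pos_of_ne_zero h1) (Nat.add_left_cancel key)

end Fiber

section Standardization

variable {α β : Type*} [LinearOrder β] {C : Finset α} {τ : α → β} {σ F : α → ℕ} {N m : ℕ}

def SortsBy (C : Finset α) (τ : α → β) (σ F : α → ℕ) : Prop :=
  ∀ p ∈ C, ∀ q ∈ C, σ p < σ q ↔ toLex (F p, τ p) < toLex (F q, τ q)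

open Classical in
noncomputable def standardize (C : Finset α) (τ : α → β) (F : α → ℕ) (p : α) : ℕ :=
  if p ∈ C then rankBy C (fun q => toLex (F q, τ q)) p else 0

lemma standardize_eq_zero {p : α} (hp : p ∉ C) : standardize C τ F p = 0 := if_neg hp

lemma bijOn_standardize (hτ : Set.InjOn τ C) :
    Set.BijOn (standardize C τ F) C (Set.Icc 1 #C) :=
  (bijOn_rankBy fun _ hp _ hq h => hτ hp hq (congrArg Prod.snd (toLex.injective h))).congr
    fun _ hp => (if_pos hp).symm

lemma sortsBy_standardize : SortsBy C τ (standardize C τ F) F := fun p hp q hq => by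
  rw [standardize, standardize, if_pos hp, if_pos hq]
  exact rankBy_lt_rankBy_iff hq

lemma SortsBy.eqOn {σ' : α → ℕ} (hσ : Set.BijOn σ C (Set.Icc 1 N))
    (hσ' : Set.BijOn σ' C (Set.Icc 1 N)) (hs : SortsBy C τ σ F) (hs' : SortsBy C τ σ' F) :
    Set.EqOn σ σ' C :=
  eqOn_of_bijOn_of_lt_iff hσ hσ' fun p hp q hq => (hs p hp q hq).trans (hs' p hp q hq).symm

lemma eq_of_isChain_of_comp_eq (hσ : Set.SurjOn σ C (Set.Icc 1 N)) {S S' : Finset ℕ}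
    {a a' : ℕ → ℕ} (ha : IsChain N m S a) (ha' : IsChain N m S' a')
    (h : ∀ p ∈ C, a (σ p) = a' (σ p)) : a = a' := by
  funext i
  by_cases hi : i ∈ Set.Icc 1 N
  · obtain ⟨p, hp, rfl⟩ := hσ hi
    exact h p hp
  · rw [ha.eq_zero i hi, ha'.eq_zero i hi]

open Classical in
noncomputable def desBy (C : Finset α) (τ : α → β) (σ : α → ℕ) (N : ℕ) : Finset ℕ :=
  {i ∈ Icc 1 (N - 1) | ∃ p ∈ C, ∃ q ∈ C, σ p = i ∧ σ q = i + 1 ∧ τ q < τ p}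

variable [Nonempty α]

lemma apply_invFunOn_ne_succ {γ : Type*} {g : α → γ} (hσ : Set.BijOn σ C (Set.Icc 1 N))
    (hg : Set.InjOn g C) {i : ℕ} (hi : i ∈ Set.Icc 1 N) (hi1 : i + 1 ∈ Set.Icc 1 N) :
    g (Function.invFunOn σ C i) ≠ g (Function.invFunOn σ C (i + 1)) := by
  refine hg.ne (hσ.surjOn.mapsTo_invFunOn hi) (hσ.surjOn.mapsTo_invFunOn hi1) fun heq => ?_
  have := congrArg σ heq
  rw [hσ.invOn_invFunOn.2 hi, hσ.invOn_invFunOn.2 hi1] at this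
  omega

lemma mem_desBy_iff (hσ : Set.BijOn σ C (Set.Icc 1 N)) {i : ℕ} :
    i ∈ desBy C τ σ N ↔ i ∈ Icc 1 (N - 1) ∧
      τ (Function.invFunOn σ C (i + 1)) < τ (Function.invFunOn σ C i) := by
  simp only [desBy, mem_filter, and_congr_right_iff, mem_Icc]
  intro hi
  have hi' : i ∈ Set.Icc 1 N := ⟨hi.1, by omega⟩
  have hi1 : i + 1 ∈ Set.Icc 1 N := ⟨by omega, by omega⟩
  constructor
  · rintro ⟨p, hp, q, hq, rfl, hσq, hτ⟩
    rwa [← hσq, hσ.invOn_invFunOn.1 hp, hσ.invOn_invFunOn.1 hq]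
  · exact fun h => ⟨_, hσ.surjOn.mapsTo_invFunOn hi', _, hσ.surjOn.mapsTo_invFunOn hi1,
      hσ.invOn_invFunOn.2 hi', hσ.invOn_invFunOn.2 hi1, h⟩

lemma desBy_toDual (hσ : Set.BijOn σ C (Set.Icc 1 N)) (hτ : Set.InjOn τ C) :
    desBy C (OrderDual.toDual ∘ τ) σ N = Icc 1 (N - 1) \ desBy C τ σ N := by
  ext i
  rw [mem_sdiff, mem_desBy_iff hσ, mem_desBy_iff hσ]
  refine and_congr_right fun hi => ?_
  simp only [Function.comp_apply, OrderDual.toDual_lt_toDual, hi, true_and, not_lt]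
  have hi' : i ∈ Set.Icc 1 N := ⟨(mem_Icc.mp hi).1, by have := mem_Icc.mp hi; omega⟩
  have hi1 : i + 1 ∈ Set.Icc 1 N := ⟨by omega, by have := mem_Icc.mp hi; omega⟩
  exact ⟨le_of_lt, fun hle => hle.lt_of_ne (apply_invFunOn_ne_succ hσ hτ hi' hi1)⟩

lemma sortsBy_comp_of_isChain (hσ : Set.BijOn σ C (Set.Icc 1 N)) (hτ : Set.InjOn τ C)
    {a : ℕ → ℕ} (ha : IsChain N m (desBy C τ σ N) a) : SortsBy C τ σ (a ∘ σ) := by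
  have hmono : StrictMonoOn (fun i => toLex (a i, τ (Function.invFunOn σ C i)))
      (Set.Icc 1 N) := by
    refine strictMonoOn_of_lt_add_one Set.ordConnected_Icc fun i _ hi hi1 => ?_
    rw [Prod.Lex.toLex_lt_toLex]
    refine (ha.monotoneOn hi hi1 (Nat.le_succ i)).lt_or_eq.imp id fun h => ⟨h, ?_⟩
    have hdes : i ∉ desBy C τ σ N := fun hd => (ha.lt_succ i hd).ne h
    rw [mem_desBy_iff hσ] at hdes
    exact (not_lt.mp fun h' => hdes ⟨mem_Icc.mpr ⟨hi.1, by have := hi1.2; omega⟩, h'⟩).lt_of_ne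
      (apply_invFunOn_ne_succ hσ hτ hi hi1)
  intro p hp q hq
  rw [← hmono.lt_iff_lt (hσ.mapsTo hp) (hσ.mapsTo hq)]
  simp only [Function.comp_apply, hσ.invOn_invFunOn.1 hp, hσ.invOn_invFunOn.1 hq]

noncomputable def readAlong (C : Finset α) (σ F : α → ℕ) (N : ℕ) (i : ℕ) : ℕ :=
  if i ∈ Set.Icc 1 N then F (Function.invFunOn σ C i) else 0

lemma isChain_readAlong (hσ : Set.BijOn σ C (Set.Icc 1 N)) (hF : Set.MapsTo F C (Set.Icc 1 m))
    (hs : SortsBy C τ σ F) : IsChain N m (desBy C τ σ N) (readAlong C σ F N) := by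
  have hcell := hσ.surjOn.mapsTo_invFunOn
  have hlex : ∀ i ∈ Set.Icc 1 N, ∀ j ∈ Set.Icc 1 N, i < j →
      toLex (readAlong C σ F N i, τ (Function.invFunOn σ C i)) <
        toLex (readAlong C σ F N j, τ (Function.invFunOn σ C j)) := fun i hi j hj hij => by
    rw [readAlong, readAlong, if_pos hi, if_pos hj, ← hs _ (hcell hi) _ (hcell hj),
      hσ.invOn_invFunOn.2 hi, hσ.invOn_invFunOn.2 hj]
    exact hij
  refine ⟨fun i hi => if_neg hi, fun i hi => ?_, fun i hi j hj hij => ?_, fun i hi => ?_⟩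
  · rw [readAlong, if_pos hi]
    exact hF (hcell hi)
  · rcases hij.lt_or_eq with hij | rfl
    · rcases Prod.Lex.toLex_lt_toLex.mp (hlex i hi j hj hij) with h | ⟨h, _⟩
      exacts [h.le, h.le]
    · exact le_rfl
  · obtain ⟨hIcc, hτ⟩ := (mem_desBy_iff hσ).mp hi
    have := mem_Icc.mp hIcc
    rcases Prod.Lex.toLex_lt_toLex.mp
      (hlex i ⟨this.1, by omega⟩ (i + 1) ⟨by omega, by omega⟩ (Nat.lt_succ_self i)) with h | ⟨_, h⟩
    exacts [h, absurd h hτ.asymm]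

lemma readAlong_comp (hσ : Set.BijOn σ C (Set.Icc 1 N)) (hσ0 : ∀ p ∉ C, σ p = 0)
    (hF0 : ∀ p ∉ C, F p = 0) : readAlong C σ F N ∘ σ = F := by
  funext p
  by_cases hp : p ∈ C
  · rw [Function.comp_apply, readAlong, if_pos (hσ.mapsTo hp), hσ.invOn_invFunOn.1 hp]
  · rw [Function.comp_apply, readAlong, hσ0 p hp, hF0 p hp, if_neg (by simp)]

end Standardization

section Fundamental

variable {α β : Type*} [LinearOrder β] {C : Finset α} {τ : α → β}
  {R : α → α → Prop} {r : ℕ → ℕ → Prop} {N m : ℕ}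

structure IsFilling (C : Finset α) (R : α → α → Prop) (r : ℕ → ℕ → Prop) (m : ℕ)
    (F : α → ℕ) : Prop where
  eq_zero : ∀ p ∉ C, F p = 0
  mapsTo : Set.MapsTo F C (Set.Icc 1 m)
  rel : ∀ p ∈ C, ∀ q ∈ C, R p q → r (F p) (F q)

def IsLinExt (C : Finset α) (R : α → α → Prop) (N : ℕ) (σ : α → ℕ) : Prop :=
  IsFilling C R (· < ·) N σ ∧ Set.BijOn σ C (Set.Icc 1 N)

instance : Finite {σ // IsLinExt C R N σ} :=
  finite_of_support_subset_of_le C N fun _ hσ =>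
    ⟨hσ.1.eq_zero, fun _ hp => (hσ.1.mapsTo hp).2⟩

noncomputable instance : Fintype {σ // IsLinExt C R N σ} := Fintype.ofFinite _

-- `r` is `≤` when the tie-break `τ` increases along `R`, and `<` when it decreases along `R`.
variable (hτ : Set.InjOn τ C)
  (hr : ∀ p ∈ C, ∀ q ∈ C, R p q → ∀ x y, r x y ↔ toLex (x, τ p) < toLex (y, τ q))
include hτ hr

lemma isLinExt_standardize {F : α → ℕ} (hF : IsFilling C R r m F) :
    IsLinExt C R #C (standardize C τ F) :=
  ⟨⟨fun _ => standardize_eq_zero, (bijOn_standardize hτ).mapsTo, fun p hp q hq hpq =>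
    (sortsBy_standardize p hp q hq).mpr ((hr p hp q hq hpq _ _).mp (hF.rel p hp q hq hpq))⟩,
    bijOn_standardize hτ⟩

variable [Nonempty α]

lemma isFilling_comp {σ : α → ℕ} (hσ : IsLinExt C R N σ) {a : ℕ → ℕ}
    (ha : IsChain N m (desBy C τ σ N) a) : IsFilling C R r m (a ∘ σ) where
  eq_zero p hp := by rw [Function.comp_apply, hσ.1.eq_zero p hp, ha.eq_zero 0 (by simp)]
  mapsTo := ha.mapsTo.comp hσ.2.mapsTo
  rel p hp q hq hpq := (hr p hp q hq hpq _ _).mpr <|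
    (sortsBy_comp_of_isChain hσ.2 hτ ha p hp q hq).mp (hσ.1.rel p hp q hq hpq)

theorem card_isFilling (hN : #C = N) :
    Nat.card {F // IsFilling C R r m F} =
      ∑ σ : {σ // IsLinExt C R N σ}, numChains N (m - #(desBy C τ σ N)) := by
  subst hN
  let toFilling (x : Σ σ : {σ // IsLinExt C R #C σ}, {a // IsChain #C m (desBy C τ σ #C) a}) :
      {F // IsFilling C R r m F} := ⟨x.2.1 ∘ x.1.1, isFilling_comp hτ hr x.1.2 x.2.2⟩
  have hbij : Function.Bijective toFilling := by
    refine ⟨fun ⟨⟨σ, hσ⟩, a, ha⟩ ⟨⟨σ', hσ'⟩, a', ha'⟩ h => ?_, fun ⟨F, hF⟩ => ?_⟩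
    · have hF : a ∘ σ = a' ∘ σ' := congrArg Subtype.val h
      have hσσ' : σ = σ' := funext fun p => by
        by_cases hp : p ∈ C
        · refine SortsBy.eqOn hσ.2 hσ'.2 (sortsBy_comp_of_isChain hσ.2 hτ ha) ?_ hp
          rw [hF]
          exact sortsBy_comp_of_isChain hσ'.2 hτ ha'
        · rw [hσ.1.eq_zero p hp, hσ'.1.eq_zero p hp]
      subst hσσ'
      obtain rfl : a = a' :=
        eq_of_isChain_of_comp_eq hσ.2.surjOn ha ha' fun p _ => congrFun hF p
      rfl
    · have hσ := isLinExt_standardize hτ hr hF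
      refine ⟨⟨⟨_, hσ⟩, _, isChain_readAlong hσ.2 hF.mapsTo sortsBy_standardize⟩,
        Subtype.ext ?_⟩
      exact readAlong_comp hσ.2 hσ.1.eq_zero hF.eq_zero
  rw [← Nat.card_eq_of_bijective toFilling hbij, Nat.card_sigma]
  exact sum_congr rfl fun σ _ => card_chains (filter_subset _ _)

end Fundamental

end PPartition

open PPartition

lemma mem_ydCells {lam : List ℕ} {p : ℕ × ℕ} :
    p ∈ ydCells lam ↔ p.1 < lam.length ∧ p.2 < lam.getD p.1 0 := by
  simp only [ydCells, mem_biUnion, mem_range, mem_image]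
  constructor
  · rintro ⟨r, hr, c, hc, rfl⟩
    exact ⟨hr, hc⟩
  · exact fun h => ⟨p.1, h.1, p.2, h.2, rfl⟩

lemma card_ydCells (lam : List ℕ) : #(ydCells lam) = lam.sum := by
  rw [ydCells, card_biUnion fun r _ r' _ hrr' => disjoint_left.mpr fun p hp hp' => by
    obtain ⟨_, _, rfl⟩ := mem_image.mp hp
    obtain ⟨_, _, h⟩ := mem_image.mp hp'
    exact hrr' (congrArg Prod.fst h).symm]
  simp only [card_image_of_injective _ (Prod.mk_right_injective _), card_range]
  rw [← Fin.sum_univ_getElem, ← Fin.sum_univ_eq_sum_range]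
  exact sum_congr rfl fun i _ => List.getD_eq_getElem _ _ i.2

def CellCovBy (p q : ℕ × ℕ) : Prop := q = (p.1, p.2 + 1) ∨ q = (p.1 + 1, p.2)

lemma toLex_lt_toLex_of_cellCovBy {p q : ℕ × ℕ} (h : CellCovBy p q) : toLex p < toLex q := by
  rcases h with rfl | rfl <;> simp [Prod.Lex.toLex_lt_toLex]

namespace SYT

variable {lam : List ℕ}

def equivLinExt : SYT lam ≃ {σ // IsLinExt (ydCells lam) CellCovBy lam.sum σ} where
  toFun T := ⟨T.entry, ⟨T.zero_outside, T.bijOn.mapsTo, fun p _ q hq hpq => by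
    rcases hpq with rfl | rfl
    exacts [T.row_incr p.1 p.2 hq, T.col_incr p.1 p.2 hq]⟩, T.bijOn⟩
  invFun σ :=
    have hlt : ∀ p q, q ∈ ydCells lam → CellCovBy p q → σ.1 p < σ.1 q := fun p q hq hpq => by
      by_cases hp : p ∈ ydCells lam
      · exact σ.2.1.rel p hp q hq hpq
      · rw [σ.2.1.eq_zero p hp]
        exact (σ.2.2.mapsTo hq).1
    { entry := σ.1
      zero_outside := σ.2.1.eq_zero
      bijOn := σ.2.2
      row_incr := fun r c hq => hlt _ _ hq (Or.inl rfl)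
      col_incr := fun r c hq => hlt _ _ hq (Or.inr rfl) }
  left_inv _ := rfl
  right_inv _ := rfl

instance : Finite (SYT lam) := Finite.of_equiv _ equivLinExt.symm

noncomputable instance : Fintype (SYT lam) := Fintype.ofFinite _

lemma entry_lt_entry_of_lt (T : SYT lam) {r c c' : ℕ} (hc : c < c')
    (hq : (r, c') ∈ ydCells lam) : T.entry (r, c) < T.entry (r, c') := by
  induction c', hc using Nat.le_induction with
  | base => exact T.row_incr r c hq
  | succ c' hc ih =>
    have hq' : (r, c') ∈ ydCells lam := by
      rw [mem_ydCells] at hq ⊢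
      exact ⟨hq.1, by simp only at hq ⊢; omega⟩
    exact (ih hq').trans (T.row_incr r c' hq)

lemma desBy_toLex (T : SYT lam) : desBy (ydCells lam) toLex T.entry lam.sum = ascSet lam T := by
  refine filter_congr fun i _ => ?_
  refine exists_congr fun p => and_congr_right fun hp => exists_congr fun q =>
    and_congr_right fun hq => and_congr_right fun hpi => and_congr_right fun hqi =>
      ⟨fun h => ?_, fun h => ?_⟩
  · rcases Prod.Lex.toLex_lt_toLex.mp h with h | ⟨hrow, hcol⟩
    · exact h
    · obtain ⟨r, c⟩ := p
      obtain ⟨r', c'⟩ := q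
      obtain rfl : r' = r := hrow
      have : T.entry (_, c') < T.entry (_, c) := T.entry_lt_entry_of_lt hcol hp
      omega
  · exact Prod.Lex.toLex_lt_toLex.mpr (Or.inl h)

theorem card_isFilling_le (lam : List ℕ) (m : ℕ) :
    Nat.card {F // IsFilling (ydCells lam) CellCovBy (· ≤ ·) m F} =
      ∑ T : SYT lam, numChains lam.sum (m - ascNum lam T) := by
  refine (card_isFilling toLex.injective.injOn (fun p _ q _ hpq x y => ?_)
    (card_ydCells lam)).trans ((Fintype.sum_equiv equivLinExt _ _ fun T => ?_).symm)
  · have hpq := toLex_lt_toLex_of_cellCovBy hpq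
    rw [Prod.Lex.toLex_lt_toLex]
    exact ⟨fun h => h.lt_or_eq.imp_right (⟨·, hpq⟩), fun h => h.elim le_of_lt (·.1.le)⟩
  · rw [ascNum, ← desBy_toLex]
    rfl

theorem card_isFilling_lt (lam : List ℕ) (m : ℕ) :
    Nat.card {F // IsFilling (ydCells lam) CellCovBy (· < ·) m F} =
      ∑ T : SYT lam, numChains lam.sum (m - (lam.sum - 1 - ascNum lam T)) := by
  refine (card_isFilling (τ := OrderDual.toDual ∘ toLex)
    (OrderDual.toDual.injective.comp toLex.injective).injOn (fun p _ q _ hpq x y => ?_)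
    (card_ydCells lam)).trans ((Fintype.sum_equiv equivLinExt _ _ fun T => ?_).symm)
  · have hpq := toLex_lt_toLex_of_cellCovBy hpq
    rw [Prod.Lex.toLex_lt_toLex]
    exact ⟨Or.inl, fun h => h.elim id fun h => absurd h.2 hpq.asymm⟩
  · have hdes : desBy (ydCells lam) (OrderDual.toDual ∘ toLex) T.entry lam.sum =
        Icc 1 (lam.sum - 1) \ ascSet lam T := by
      rw [desBy_toDual T.bijOn toLex.injective.injOn, desBy_toLex]
    have hsub : ascSet lam T ⊆ Icc 1 (lam.sum - 1) := filter_subset _ _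
    simp only [equivLinExt, Equiv.coe_fn_mk, hdes, ascNum, card_sdiff_of_subset hsub,
      Nat.card_Icc, Nat.add_sub_cancel]

end SYT

section Rectangle

variable {k n : ℕ}

lemma mem_ydCells_replicate {p : ℕ × ℕ} :
    p ∈ ydCells (List.replicate k n) ↔ p.1 < k ∧ p.2 < n := by
  simp +contextual [mem_ydCells, List.getD_eq_getElem?_getD, List.getElem?_replicate]

lemma PPartition.IsFilling.add_sub_add_sub_le {M : ℕ} {F : ℕ × ℕ → ℕ}
    (hF : IsFilling (ydCells (List.replicate k n)) CellCovBy (· < ·) M F) {r c r' c' : ℕ}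
    (hr : r ≤ r') (hc : c ≤ c') (hr' : r' < k) (hc' : c' < n) :
    F (r, c) + (r' - r) + (c' - c) ≤ F (r', c') := by
  have hcell {a b : ℕ} (ha : a < k) (hb : b < n) : (a, b) ∈ ydCells (List.replicate k n) :=
    mem_ydCells_replicate.mpr ⟨ha, hb⟩
  have hrow : F (r, c) + (c' - c) ≤ F (r, c') := by
    induction c', hc using Nat.le_induction with
    | base => simp
    | succ c' hc ih =>
      have := hF.rel (r, c') (hcell (by omega) (by omega)) (r, c' + 1) (hcell (by omega) hc')
        (Or.inl rfl)
      have := ih (by omega)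
      omega
  have hcol : F (r, c') + (r' - r) ≤ F (r', c') := by
    induction r', hr using Nat.le_induction with
    | base => simp
    | succ r' hr ih =>
      have := hF.rel (r', c') (hcell (by omega) hc') (r' + 1, c') (hcell hr' hc') (Or.inr rfl)
      have := ih (by omega)
      omega
  omega

lemma PPartition.IsFilling.mem_Icc_of_rect (hk : 1 ≤ k) (hn : 1 ≤ n) {m : ℕ} {G : ℕ × ℕ → ℕ}
    (hG : IsFilling (ydCells (List.replicate k n)) CellCovBy (· < ·) (m + (k - 1) + (n - 1)) G)
    {p : ℕ × ℕ} (hp : p ∈ ydCells (List.replicate k n)) :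
    G p ∈ Set.Icc (1 + p.1 + p.2) (m + p.1 + p.2) := by
  obtain ⟨a, b⟩ := p
  obtain ⟨hpk, hpn⟩ := mem_ydCells_replicate.mp hp
  have h00 := (hG.mapsTo (mem_ydCells_replicate.mpr ⟨hk, hn⟩ : ((0, 0) : ℕ × ℕ) ∈ _)).1
  have htop := (hG.mapsTo (mem_ydCells_replicate.mpr ⟨by omega, by omega⟩ :
    (k - 1, n - 1) ∈ ydCells (List.replicate k n))).2
  have hlow := hG.add_sub_add_sub_le (Nat.zero_le a) (Nat.zero_le b) hpk hpn
  have hhigh := hG.add_sub_add_sub_le (r := a) (c := b) (by omega) (by omega)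
    (show k - 1 < k by omega) (show n - 1 < n by omega)
  exact ⟨by omega, by omega⟩

def strictFillingEquivWeakFilling (hk : 1 ≤ k) (hn : 1 ≤ n) (m : ℕ) :
    {G // IsFilling (ydCells (List.replicate k n)) CellCovBy (· < ·) (m + (k - 1) + (n - 1)) G}
      ≃ {F // IsFilling (ydCells (List.replicate k n)) CellCovBy (· ≤ ·) m F} where
  toFun G := ⟨fun p => if p ∈ ydCells (List.replicate k n) then G.1 p - p.1 - p.2 else 0,
    fun p hp => if_neg hp, fun p hp => by
      obtain ⟨h1, h2⟩ := G.2.mem_Icc_of_rect hk hn hp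
      simp only [if_pos (mem_coe.mp hp), Set.mem_Icc]
      omega,
    fun p hp q hq hpq => by
      obtain ⟨h1, h2⟩ := G.2.mem_Icc_of_rect hk hn hp
      have := G.2.rel p hp q hq hpq
      simp only [if_pos hp, if_pos hq]
      rcases hpq with rfl | rfl <;> simp only at * <;> omega⟩
  invFun F := ⟨fun p => if p ∈ ydCells (List.replicate k n) then F.1 p + p.1 + p.2 else 0,
    fun p hp => if_neg hp, fun p hp => by
      have hF := F.2.mapsTo hp
      have hpkn := mem_ydCells_replicate.mp hp
      simp only [if_pos (mem_coe.mp hp), Set.mem_Icc] at hF ⊢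
      omega,
    fun p hp q hq hpq => by
      have := F.2.rel p hp q hq hpq
      simp only [if_pos hp, if_pos hq]
      rcases hpq with rfl | rfl <;> simp only at * <;> omega⟩
  left_inv G := Subtype.ext <| funext fun p => by
    by_cases hp : p ∈ ydCells (List.replicate k n)
    · obtain ⟨h1, h2⟩ := G.2.mem_Icc_of_rect hk hn hp
      simp only [if_pos hp]
      omega
    · simp only [if_neg hp, G.2.eq_zero p hp]
  right_inv F := Subtype.ext <| funext fun p => by
    by_cases hp : p ∈ ydCells (List.replicate k n)
    · simp only [if_pos hp]
      omega
    · simp only [if_neg hp, F.2.eq_zero p hp]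

lemma SYT.ascNum_le (T : SYT (List.replicate k n)) :
    ascNum (List.replicate k n) T ≤ (k - 1) * (n - 1) := by
  set C := ydCells (List.replicate k n)
  have hT : IsLinExt C CellCovBy _ T.entry := (equivLinExt T).2
  let cellAfter (i : ℕ) : ℕ × ℕ := Function.invFunOn T.entry C (i + 1)
  have hmaps : ∀ i ∈ ascSet _ T, cellAfter i ∈ range (k - 1) ×ˢ Ico 1 n := by
    intro i hi
    obtain ⟨-, ⟨a, b⟩, hp, ⟨a', b'⟩, hq, rfl, hqi, hlt : a' < a⟩ := mem_filter.mp hi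
    have hcell : cellAfter (T.entry (a, b)) = (a', b') := by
      simp only [cellAfter, ← hqi, hT.2.invOn_invFunOn.1 hq]
    rw [hcell, mem_product, mem_range, mem_Ico]
    obtain ⟨hpk, hpn⟩ := mem_ydCells_replicate.mp hp
    obtain ⟨hqk, hqn⟩ := mem_ydCells_replicate.mp hq
    refine ⟨by omega, Nat.pos_of_ne_zero fun hq0 => ?_, hqn⟩
    have h1 := hT.1.add_sub_add_sub_le (r := a') (c := b') (c' := b) le_rfl (by omega) hqk hpn
    have h2 := hT.1.add_sub_add_sub_le (r := a') (c := b) hlt.le le_rfl hpk hpn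
    omega
  have hinj : Set.InjOn cellAfter (ascSet _ T) := fun i hi j hj hij => by
    have hi' := mem_Icc.mp (mem_filter.mp hi).1
    have hj' := mem_Icc.mp (mem_filter.mp hj).1
    have := congrArg T.entry hij
    rw [hT.2.invOn_invFunOn.2 ⟨by omega, by omega⟩, hT.2.invOn_invFunOn.2 ⟨by omega, by omega⟩]
      at this
    omega
  simpa [ascNum] using card_le_card_of_injOn cellAfter hmaps hinj

lemma sum_replicate_sub_one (hk : 1 ≤ k) (hn : 1 ≤ n) :
    (List.replicate k n).sum - 1 = (k - 1) * (n - 1) + (k - 1) + (n - 1) := by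
  obtain ⟨k, rfl⟩ := Nat.exists_eq_add_of_le' hk
  obtain ⟨n, rfl⟩ := Nat.exists_eq_add_of_le' hn
  simp only [List.sum_replicate, smul_eq_mul, Nat.add_sub_cancel]
  ring_nf
  omega

lemma SYT.sum_numChains_sub_ascNum (hk : 1 ≤ k) (hn : 1 ≤ n) (m : ℕ) :
    ∑ T, numChains (List.replicate k n).sum (m - ascNum (List.replicate k n) T) =
      ∑ T, numChains (List.replicate k n).sum
        (m - ((k - 1) * (n - 1) - ascNum (List.replicate k n) T)) := by
  rw [← card_isFilling_le, ← Nat.card_congr (strictFillingEquivWeakFilling hk hn m),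
    card_isFilling_lt, sum_replicate_sub_one hk hn]
  refine sum_congr rfl fun T _ => congrArg _ ?_
  have := T.ascNum_le
  omega

end Rectangle

/-- Theorem: symmetry of the generalized Narayana numbers,
`N(k,n,h) = N(k,n,(k-1)(n-1)-h)`. -/
theorem narayana_symmetry (k n h : ℕ) (hk : 1 ≤ k) (hn : 1 ≤ n)
    (hh : h ≤ (k - 1) * (n - 1)) :
    Nat.card {T : SYT (List.replicate k n) // ascNum (List.replicate k n) T = h} =
      Nat.card {T : SYT (List.replicate k n) //
        ascNum (List.replicate k n) T = (k - 1) * (n - 1) - h} := by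
  have hN : 1 ≤ (List.replicate k n).sum := by
    rw [List.sum_replicate, smul_eq_mul]
    exact Nat.mul_pos hk hn
  have hfiber := card_fiber_eq_of_sum_apply_sub_eq (numChains_zero hN)
    (by rw [numChains_one]; exact one_ne_zero) (SYT.sum_numChains_sub_ascNum hk hn) h
  rw [Nat.card_eq_fintype_card, Fintype.card_subtype, hfiber, Nat.card_eq_fintype_card,
    Fintype.card_subtype]
  refine congrArg card (filter_congr fun T _ => ?_)
  have := T.ascNum_le
  omega
end

section
/- Let P be a finite partially ordered set with p elements, and let ω and ω′ be two linear extensions of P (natural labelings). Then there exists a bijection f : L(P) → L(P) on the set of linear extensions of P such that for every linear extension σ, Des_ω(σ) = Des_{ω′}(f(σ)). -/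
/-- A linear extension of a finite poset `P`: an order-preserving bijection from `P` to
`Fin (card P)` (thought of as `{1, …, p}`). -/
structure LinExt (P : Type*) [PartialOrder P] [Fintype P] where
  toEquiv : P ≃ Fin (Fintype.card P)
  strictMono : ∀ x y : P, x < y → toEquiv x < toEquiv y

/-- The descent set of the linear extension `σ` with respect to the natural labeling
`ω`: indices `1 ≤ i ≤ p-1` with `ω(σ⁻¹(i)) > ω(σ⁻¹(i+1))` (positions are 1-indexed, so
the element in position `i` is `σ.toEquiv.symm ⟨i-1, _⟩`). -/
def DesSet {P : Type*} [PartialOrder P] [Fintype P] (ω σ : LinExt P) : Set ℕ :=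
  { i : ℕ | ∃ h : i < Fintype.card P, 1 ≤ i ∧
      ω.toEquiv (σ.toEquiv.symm ⟨i, h⟩) <
        ω.toEquiv (σ.toEquiv.symm ⟨i - 1, Nat.lt_of_le_of_lt (Nat.sub_le i 1) h⟩) }

/-!
If incomparable `a`, `b` carry consecutive labels under `ω`, exchanging these two labels is
compensated by the involution of `L(P)` that exchanges `a` and `b` in `σ` whenever they occupy
consecutive positions. In that case the word `ω ∘ σ⁻¹` is unchanged; otherwise the two letters
whose values change are never neighbours, so no descent changes. Any two natural labelings are
joined by a chain of such exchanges, since exchanging the labels of an adjacent pair ordered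
oppositely by `ω'` shrinks the set of pairs on which `ω` and `ω'` disagree.
-/

theorem swap_lt_swap_iff_of_adjacent {n : ℕ} {k k' i j : Fin n}
    (hk : (k : ℕ) + 1 = k' ∨ (k' : ℕ) + 1 = k) (h : ¬(i = k ∧ j = k')) (h' : ¬(i = k' ∧ j = k)) :
    Equiv.swap k k' i < Equiv.swap k k' j ↔ i < j := by
  rw [Equiv.swap_apply_def, Equiv.swap_apply_def]
  simp only [Fin.ext_iff] at h h'
  split_ifs <;> simp only [Fin.lt_def, Fin.ext_iff] at * <;> omega

theorem Fin.strictMono_of_lt_of_val_add_one_eq {α : Type*} [Preorder α] {n : ℕ} {f : Fin n → α}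
    (h : ∀ i j : Fin n, (i : ℕ) + 1 = j → f i < f j) : StrictMono f := by
  cases n with
  | zero => exact fun i => i.elim0
  | succ n => exact Fin.strictMono_iff_lt_succ.2 fun i => h _ _ (by simp)

namespace LinExt

variable {P : Type*} [PartialOrder P] [Fintype P]

theorem ext {σ τ : LinExt P} (h : σ.toEquiv = τ.toEquiv) : σ = τ := by
  cases σ; cases τ; cases h; rfl

theorem desSet_congr {ω₁ σ₁ ω₂ σ₂ : LinExt P}
    (h : ∀ i j : Fin (Fintype.card P), (j : ℕ) + 1 = i →
      (ω₁.toEquiv (σ₁.toEquiv.symm i) < ω₁.toEquiv (σ₁.toEquiv.symm j) ↔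
        ω₂.toEquiv (σ₂.toEquiv.symm i) < ω₂.toEquiv (σ₂.toEquiv.symm j))) :
    DesSet ω₁ σ₁ = DesSet ω₂ σ₂ := by
  ext i
  refine exists_congr fun hi => and_congr_right fun h1 => h _ _ ?_
  simp only
  omega

def Adjacent (σ : LinExt P) (a b : P) : Prop :=
  (σ.toEquiv a : ℕ) + 1 = σ.toEquiv b ∨ (σ.toEquiv b : ℕ) + 1 = σ.toEquiv a

instance (σ : LinExt P) (a b : P) : Decidable (σ.Adjacent a b) :=
  inferInstanceAs (Decidable (_ ∨ _))

theorem Adjacent.symm {σ : LinExt P} {a b : P} (h : σ.Adjacent a b) : σ.Adjacent b a :=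
  Or.symm h

theorem adjacent_of_apply_symm {σ : LinExt P} {a b : P} {i j : Fin (Fintype.card P)}
    (hij : (j : ℕ) + 1 = i) (ha : σ.toEquiv.symm i = a) (hb : σ.toEquiv.symm j = b) :
    σ.Adjacent a b := by
  rw [Equiv.symm_apply_eq] at ha hb
  exact .inr (ha ▸ hb ▸ hij)

def inversions (ω ω' : LinExt P) : Finset (P × P) :=
  {q | ω.toEquiv q.1 < ω.toEquiv q.2 ∧ ω'.toEquiv q.2 < ω'.toEquiv q.1}

@[simp]
theorem mem_inversions {ω ω' : LinExt P} {a b : P} :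
    (a, b) ∈ inversions ω ω' ↔ ω.toEquiv a < ω.toEquiv b ∧ ω'.toEquiv b < ω'.toEquiv a := by
  simp [inversions]

theorem incompRel_of_mem_inversions {ω ω' : LinExt P} {a b : P} (h : (a, b) ∈ inversions ω ω') :
    IncompRel (· < ·) a b := by
  rw [mem_inversions] at h
  exact ⟨fun hab => (ω'.strictMono a b hab).asymm h.2, fun hba => (ω.strictMono b a hba).asymm h.1⟩

theorem exists_adjacent_mem_inversions {ω ω' : LinExt P} (h : ω ≠ ω') :
    ∃ a b, ω.Adjacent a b ∧ (a, b) ∈ inversions ω ω' := by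
  contrapose! h
  have hmono : StrictMono (ω.toEquiv.symm.trans ω'.toEquiv) := by
    refine Fin.strictMono_of_lt_of_val_add_one_eq fun i j hij => ?_
    have hi : ω.toEquiv (ω.toEquiv.symm i) = i := ω.toEquiv.apply_symm_apply i
    have hj : ω.toEquiv (ω.toEquiv.symm j) = j := ω.toEquiv.apply_symm_apply j
    have hne : i ≠ j := fun h => by simp [h] at hij
    have := h (ω.toEquiv.symm i) (ω.toEquiv.symm j) (.inl (by rwa [hi, hj]))
    simp only [mem_inversions, hi, hj, not_and, not_lt] at this
    exact (this (Fin.lt_def.2 (by omega))).lt_of_ne (by simpa using hne)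
  exact ext <| Equiv.ext fun x => by simpa using (hmono.apply_eq (x := ω.toEquiv x)).symm

section swap

variable [DecidableEq P]

def swapAdjacent (σ : LinExt P) {a b : P} (hab : IncompRel (· < ·) a b) (h : σ.Adjacent a b) :
    LinExt P where
  toEquiv := (Equiv.swap a b).trans σ.toEquiv
  strictMono x y hxy := by
    rw [Equiv.trans_apply, Equiv.trans_apply, σ.toEquiv.injective.map_swap,
      σ.toEquiv.injective.map_swap, swap_lt_swap_iff_of_adjacent h]
    · exact σ.strictMono x y hxy
    all_goals
      simp only [σ.toEquiv.injective.eq_iff]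
      rintro ⟨rfl, rfl⟩
    exacts [hab.1 hxy, hab.2 hxy]

variable {a b : P} {hab : IncompRel (· < ·) a b}

@[simp]
theorem swapAdjacent_apply (σ : LinExt P) (h : σ.Adjacent a b) (x : P) :
    (σ.swapAdjacent hab h).toEquiv x = σ.toEquiv (Equiv.swap a b x) :=
  rfl

theorem Adjacent.swapAdjacent {σ : LinExt P} (h : σ.Adjacent a b) :
    (σ.swapAdjacent hab h).Adjacent a b := by
  simpa [Adjacent, or_comm] using h

theorem swapAdjacent_swapAdjacent (σ : LinExt P) (h : σ.Adjacent a b) :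
    (σ.swapAdjacent hab h).swapAdjacent hab h.swapAdjacent = σ :=
  ext <| Equiv.ext fun x => by simp

variable (hab) in
def swapIfAdjacent (σ : LinExt P) : LinExt P :=
  if h : σ.Adjacent a b then σ.swapAdjacent hab h else σ

theorem swapIfAdjacent_involutive : Function.Involutive (swapIfAdjacent (P := P) hab) := by
  intro σ
  by_cases h : σ.Adjacent a b
  · simp only [swapIfAdjacent, dif_pos h, dif_pos h.swapAdjacent, swapAdjacent_swapAdjacent]
  · simp only [swapIfAdjacent, dif_neg h]

theorem desSet_swapAdjacent_swapAdjacent {ω σ : LinExt P} (hω : ω.Adjacent a b)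
    (hσ : σ.Adjacent a b) :
    DesSet (ω.swapAdjacent hab hω) (σ.swapAdjacent hab hσ) = DesSet ω σ :=
  desSet_congr fun i j _ => by simp [swapAdjacent]

theorem desSet_swapAdjacent_of_not_adjacent {ω σ : LinExt P} (hω : ω.Adjacent a b)
    (hσ : ¬σ.Adjacent a b) : DesSet (ω.swapAdjacent hab hω) σ = DesSet ω σ := by
  refine desSet_congr fun i j hij => ?_
  simp only [swapAdjacent_apply, ω.toEquiv.injective.map_swap]
  apply swap_lt_swap_iff_of_adjacent hω <;> simp only [ω.toEquiv.injective.eq_iff] <;>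
    rintro ⟨hi, hj⟩
  exacts [hσ (adjacent_of_apply_symm hij hi hj), hσ (adjacent_of_apply_symm hij hi hj).symm]

theorem desSet_swapAdjacent_swapIfAdjacent {ω : LinExt P} (hω : ω.Adjacent a b) (σ : LinExt P) :
    DesSet (ω.swapAdjacent hab hω) (swapIfAdjacent hab σ) = DesSet ω σ := by
  by_cases hσ : σ.Adjacent a b
  · rw [swapIfAdjacent, dif_pos hσ, desSet_swapAdjacent_swapAdjacent]
  · rw [swapIfAdjacent, dif_neg hσ, desSet_swapAdjacent_of_not_adjacent hω hσ]

theorem inversions_swapAdjacent_ssubset {ω ω' : LinExt P} (hω : ω.Adjacent a b)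
    (hinv : (a, b) ∈ inversions ω ω') :
    inversions (ω.swapAdjacent (incompRel_of_mem_inversions hinv) hω) ω' ⊂ inversions ω ω' := by
  obtain ⟨hlt, hlt'⟩ := mem_inversions.1 hinv
  refine (Finset.ssubset_iff_of_subset ?_).2 ⟨(a, b), hinv, ?_⟩
  · rintro ⟨x, y⟩ hxy
    simp only [mem_inversions, swapAdjacent_apply, ω.toEquiv.injective.map_swap] at hxy ⊢
    refine ⟨(swap_lt_swap_iff_of_adjacent hω ?_ ?_).1 hxy.1, hxy.2⟩ <;>
      simp only [ω.toEquiv.injective.eq_iff] <;> rintro ⟨rfl, rfl⟩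
    · simp only [Equiv.swap_apply_left, Equiv.swap_apply_right] at hxy
      exact hlt.asymm hxy.1
    · exact hlt'.asymm hxy.2
  · intro h
    simp only [mem_inversions, swapAdjacent_apply, Equiv.swap_apply_left,
      Equiv.swap_apply_right] at h
    exact hlt.asymm h.1

end swap

end LinExt

/-- Theorem: for any finite poset `P` and any two natural labelings `ω`, `ω′`, there is
a bijection `f` on the set of linear extensions of `P` with
`Des_ω(σ) = Des_{ω′}(f(σ))` for all `σ`. -/
theorem exists_bijection_des_natural_labelings (P : Type*) [PartialOrder P] [Fintype P]
    (ω ω' : LinExt P) :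
    ∃ f : LinExt P → LinExt P, Function.Bijective f ∧
      ∀ σ : LinExt P, DesSet ω σ = DesSet ω' (f σ) := by
  classical
  induction hn : (LinExt.inversions ω ω').card using Nat.strong_induction_on generalizing ω with
  | _ n ih =>
  obtain rfl | hne := eq_or_ne ω ω'
  · exact ⟨id, Function.bijective_id, fun σ => rfl⟩
  obtain ⟨a, b, hω, hinv⟩ := LinExt.exists_adjacent_mem_inversions hne
  have hinc := LinExt.incompRel_of_mem_inversions hinv
  obtain ⟨f, hf, hdes⟩ := ih _
    (hn ▸ Finset.card_lt_card (LinExt.inversions_swapAdjacent_ssubset hω hinv)) _ rfl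
  exact ⟨f ∘ LinExt.swapIfAdjacent hinc, hf.comp LinExt.swapIfAdjacent_involutive.bijective,
    fun σ => (LinExt.desSet_swapAdjacent_swapIfAdjacent hω σ).symm.trans (hdes _)⟩
end
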